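/- arXiv:1202.5785 — 4 statements merged into one kernel-verified Lean document; each statement's English description precedes it below -/
import Mathlib

section
/- If α is a Pisot number, then the distance from αⁿ to the nearest integer tends to 0 exponentially fast as n → ∞; more precisely, there exist constants C > 0 and 0 < θ < 1 such that ‖αⁿ‖ ≤ C·θⁿ for all n ≥ 1, where ‖x‖ denotes the distance from x to the nearest integer. -/
/-!
For every `n`, the sum of the `n`-th powers of the distinct conjugates of the algebraic integer `α`
is the trace of `αⁿ` from `ℚ(α)` to `ℚ`, hence a rational integer `m`. So `αⁿ` differs from the
integer `m` by the sum of the `n`-th powers of the other conjugates, all of modulus `< 1`, which is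
at most `d θⁿ`, with `d` the degree of `α` and `θ < 1` the largest of those moduli.
-/

open IntermediateField Polynomial Finset

theorem exists_intCast_eq_sum_aroots_pow {L E : Type*} [Field L] [CharZero L] [Field E]
    [CharZero E] [IsAlgClosed E] [DecidableEq E] {α : L} (hα : IsIntegral ℤ α) (n : ℕ) :
    ∃ m : ℤ, (m : E) = ∑ z ∈ ((minpoly ℚ α).aroots E).toFinset, z ^ n := by
  have hαℚ : IsIntegral ℚ α := hα.tower_top
  have : FiniteDimensional ℚ ℚ⟮α⟯ := adjoin.finiteDimensional hαℚ
  have : Fintype (ℚ⟮α⟯ →ₐ[ℚ] E) := fintypeOfAlgHomAdjoinIntegral ℚ hαℚ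
  have hgen : IsIntegral ℤ (AdjoinSimple.gen ℚ α) :=
    (isIntegral_algebraMap_iff (algebraMap ℚ⟮α⟯ L).injective).mp hα
  obtain ⟨m, hm⟩ := IsIntegrallyClosed.isIntegral_iff.mp
    (Algebra.isIntegral_trace (R := ℤ) (L := ℚ) (hgen.pow n))
  refine ⟨m, ?_⟩
  rw [algebraMap_int_eq, eq_intCast] at hm
  rw [← map_intCast (algebraMap ℚ E), hm, trace_eq_sum_embeddings E,
    sum_subtype _ (fun _ => Multiset.mem_toFinset) (· ^ n)]
  refine Fintype.sum_equiv (algHomAdjoinIntegralEquiv ℚ hαℚ) _ _ fun σ => ?_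
  obtain ⟨z, rfl⟩ := (algHomAdjoinIntegralEquiv ℚ hαℚ).symm.surjective σ
  rw [Equiv.apply_symm_apply, ← algHomAdjoinIntegralEquiv_symm_apply_gen ℚ hαℚ z, ← map_pow]
  -- the two `Algebra ℚ ℚ⟮α⟯` instances in play agree only up to unfolding
  rfl

theorem abs_sub_round_le_norm_of_add_eq_intCast {x : ℝ} {w : ℂ} {m : ℤ} (h : (x : ℂ) + w = m) :
    |x - round x| ≤ ‖w‖ := by
  have : ((x - m : ℝ) : ℂ) = -w := by push_cast; linear_combination h
  calc |x - round x| ≤ |x - m| := round_le x m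
    _ = ‖w‖ := by rw [← Real.norm_eq_abs, ← Complex.norm_real, this, norm_neg]

theorem Finset.norm_sum_pow_le_card_mul {𝕜 : Type*} [NormedDivisionRing 𝕜] (s : Finset 𝕜) {θ : ℝ}
    (hs : ∀ z ∈ s, ‖z‖ ≤ θ) (n : ℕ) : ‖∑ z ∈ s, z ^ n‖ ≤ #s * θ ^ n := by
  calc ‖∑ z ∈ s, z ^ n‖ ≤ ∑ z ∈ s, ‖z‖ ^ n := by
        simpa only [norm_pow] using norm_sum_le s (· ^ n)
    _ ≤ ∑ _z ∈ s, θ ^ n := sum_le_sum fun z hz => pow_le_pow_left₀ (norm_nonneg z) (hs z hz) n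
    _ = #s * θ ^ n := by rw [sum_const, nsmul_eq_mul]

theorem Finset.exists_pos_lt_one_forall_le {ι : Type*} (s : Finset ι) (f : ι → ℝ)
    (hf : ∀ i ∈ s, f i < 1) : ∃ θ, 0 < θ ∧ θ < 1 ∧ ∀ i ∈ s, f i ≤ θ := by
  classical
  let t := insert (1 / 2) (s.image f)
  have ht : t.Nonempty := insert_nonempty _ _
  refine ⟨t.max' ht, ?_, ?_, fun i hi => t.le_max' _ (mem_insert_of_mem (mem_image_of_mem f hi))⟩
  · exact one_half_pos.trans_le (t.le_max' _ (mem_insert_self _ _))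
  · refine (t.max'_lt_iff ht).mpr fun y hy => ?_
    rcases mem_insert.mp hy with rfl | hy
    · norm_num
    · obtain ⟨i, hi, rfl⟩ := mem_image.mp hy
      exact hf i hi

theorem Finset.exists_norm_sum_pow_le_geometric {𝕜 : Type*} [NormedDivisionRing 𝕜] (s : Finset 𝕜)
    (hs : ∀ z ∈ s, ‖z‖ < 1) :
    ∃ C : ℝ, 0 < C ∧ ∃ θ : ℝ, 0 < θ ∧ θ < 1 ∧ ∀ n : ℕ, ‖∑ z ∈ s, z ^ n‖ ≤ C * θ ^ n := by
  obtain ⟨θ, hθ0, hθ1, hθ⟩ := s.exists_pos_lt_one_forall_le norm hs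
  refine ⟨#s + 1, by positivity, θ, hθ0, hθ1, fun n => ?_⟩
  calc ‖∑ z ∈ s, z ^ n‖ ≤ #s * θ ^ n := s.norm_sum_pow_le_card_mul hθ n
    _ ≤ (#s + 1) * θ ^ n := by gcongr; linarith

theorem stmt_3_general (α : ℝ) (hint : IsIntegral ℤ α)
    (hsmall : ∀ z ∈ ((minpoly ℚ α).map (algebraMap ℚ ℂ)).roots,
      z ≠ (α : ℂ) → ‖z‖ < 1) :
    ∃ C : ℝ, 0 < C ∧ ∃ θ : ℝ, 0 < θ ∧ θ < 1 ∧ ∀ n : ℕ, 1 ≤ n →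
      |α ^ n - round (α ^ n)| ≤ C * θ ^ n := by
  classical
  set R := ((minpoly ℚ α).aroots ℂ).toFinset
  have hαR : (α : ℂ) ∈ R := by
    rw [Multiset.mem_toFinset, mem_aroots, ← Complex.coe_algebraMap, aeval_algebraMap_apply,
      minpoly.aeval, map_zero]
    exact ⟨minpoly.ne_zero hint.tower_top, rfl⟩
  obtain ⟨C, hC, θ, hθ0, hθ1, hbound⟩ := (R.erase α).exists_norm_sum_pow_le_geometric
    fun z hz => hsmall z (Multiset.mem_toFinset.mp (mem_of_mem_erase hz)) (ne_of_mem_erase hz)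
  refine ⟨C, hC, θ, hθ0, hθ1, fun n _ => ?_⟩
  obtain ⟨m, hm⟩ := exists_intCast_eq_sum_aroots_pow (E := ℂ) hint n
  rw [← add_sum_erase R _ hαR] at hm
  exact (abs_sub_round_le_norm_of_add_eq_intCast (by rw [hm]; push_cast; rfl)).trans (hbound n)

/-- For a Pisot number `α`, the distance from `αⁿ` to the nearest integer decays
exponentially: there are `C > 0` and `0 < θ < 1` with `‖αⁿ‖ ≤ C·θⁿ` for all `n ≥ 1`. -/
theorem stmt_3 (α : ℝ) (hint : IsIntegral ℤ α) (hα : 1 < α)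
    (hsmall : ∀ z ∈ ((minpoly ℚ α).map (algebraMap ℚ ℂ)).roots,
      z ≠ (α : ℂ) → ‖z‖ < 1) :
    ∃ C : ℝ, 0 < C ∧ ∃ θ : ℝ, 0 < θ ∧ θ < 1 ∧ ∀ n : ℕ, 1 ≤ n →
      |α ^ n - round (α ^ n)| ≤ C * θ ^ n :=
  stmt_3_general α hint hsmall
end

section
/- Every totally real number field F of degree at least 2 over ℚ contains a Pisot number that generates F over ℚ. -/
/-!
Minkowski's convex body theorem gives a nonzero algebraic integer `a` with `w a < 1` at every
infinite place `w` other than the place `w₀` of `ι`. As `|N(a)| ≥ 1` is the product of the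
`w a` and there is a second place, `w₀ a > 1`. Squaring makes `ι` of it positive; since `F` is
totally real, an embedding other than `ι` lies over another place, so `α = a²` is a Pisot number,
and it generates `F` because no conjugate other than `ι α` itself has modulus `≥ 1`.
-/

open NumberField NumberField.InfinitePlace NumberField.mixedEmbedding

namespace NumberField

variable {K : Type*} [Field K]

theorem IsTotallyReal.of_forall_im_eq_zero (h : ∀ φ : K →+* ℂ, ∀ x : K, (φ x).im = 0) :
    IsTotallyReal K where
  isReal w := by
    rw [← mk_embedding w, isReal_mk_iff, ComplexEmbedding.isReal_iff]
    ext x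
    exact Complex.conj_eq_iff_im.mpr (h _ x)

theorem IsTotallyReal.eq_of_mk_eq [IsTotallyReal K] {φ ψ : K →+* ℂ}
    (h : InfinitePlace.mk φ = InfinitePlace.mk ψ) : φ = ψ := by
  rcases mk_eq_iff.mp h with h | h
  · exact h
  · rwa [ComplexEmbedding.isReal_iff.mp (IsTotallyReal.complexEmbedding_isReal φ)] at h

variable [NumberField K]

theorem exists_ne_zero_forall_infinitePlace_lt_one (w₀ : InfinitePlace K) :
    ∃ a : 𝓞 K, a ≠ 0 ∧ ∀ ⦃w⦄, w ≠ w₀ → w a < 1 := by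
  classical
  obtain ⟨B, hB, -⟩ := ENNReal.lt_iff_exists_nnreal_btwn.mp (minkowskiBound_lt_top K 1)
  obtain ⟨g, hg_eq, hg_prod⟩ := adjust_f K (f := 1) (w₁ := w₀) B fun _ _ ↦ one_ne_zero
  have hvol : minkowskiBound K 1 < MeasureTheory.volume (convexBodyLT K g) := by
    rw [convexBodyLT_volume, hg_prod]
    calc minkowskiBound K 1 < B := hB
      _ ≤ convexBodyLTFactor K * B := by
        exact_mod_cast le_mul_of_one_le_left zero_le (one_le_convexBodyLTFactor K)
  obtain ⟨a, ha, hlt⟩ := exists_ne_zero_mem_ringOfIntegers_lt K hvol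
  exact ⟨a, ha, fun w hw ↦ by simpa [hg_eq w hw] using hlt w⟩

theorem InfinitePlace.one_le_prod_pow_mult {a : 𝓞 K} (ha : a ≠ 0) :
    1 ≤ ∏ w : InfinitePlace K, w a ^ mult w := by
  rw [prod_eq_abs_norm, ← Algebra.coe_norm_int, ← Int.cast_one, ← Int.cast_abs, Rat.cast_intCast,
    Int.cast_le]
  exact Int.one_le_abs (Algebra.norm_ne_zero_iff.mpr ha)

theorem InfinitePlace.one_lt_of_lt_one {w w' : InfinitePlace K} {a : 𝓞 K} (ha : a ≠ 0)
    (hw' : w' ≠ w) (h : ∀ ⦃z⦄, z ≠ w → z a < 1) : 1 < w a := by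
  by_contra! hwa
  have hle : ∀ z : InfinitePlace K, z a ≤ 1 := fun z ↦ by
    by_cases hz : z = w
    · exact hz ▸ hwa
    · exact (h hz).le
  have hpos : ∀ z : InfinitePlace K, 0 < z a :=
    fun z ↦ pos_iff.mpr (RingOfIntegers.coe_ne_zero_iff.mpr ha)
  have : ∏ z : InfinitePlace K, z a ^ mult z < ∏ _z : InfinitePlace K, (1 : ℝ) :=
    Finset.prod_lt_prod (fun z _ ↦ pow_pos (hpos z) _)
      (fun z _ ↦ pow_le_one₀ (hpos z).le (hle z))
      ⟨w', Finset.mem_univ _, pow_lt_one₀ (hpos w').le (h hw') mult_ne_zero⟩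
  rw [Finset.prod_const_one] at this
  exact (one_le_prod_pow_mult ha).not_gt this

theorem IsTotallyReal.exists_ne_infinitePlace [IsTotallyReal K] (hK : 2 ≤ Module.finrank ℚ K)
    (w : InfinitePlace K) : ∃ w', w' ≠ w := by
  classical
  rw [IsTotallyReal.finrank, nrRealPlaces] at hK
  obtain ⟨w', hw'⟩ := Fintype.exists_ne_of_one_lt_card hK ⟨w, IsTotallyReal.isReal w⟩
  exact ⟨w'.1, fun h ↦ hw' (Subtype.ext h)⟩

end NumberField

/-- Every totally real number field of degree at least 2 contains a Pisot number
generating it over `ℚ`. -/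
theorem stmt_6 (F : Type*) [Field F] [NumberField F]
    (htr : ∀ φ : F →+* ℂ, ∀ x : F, (φ x).im = 0)
    (hdeg : 2 ≤ Module.finrank ℚ F)
    (ι : F →+* ℝ) :
    ∃ α : F, IsIntegral ℤ α ∧ 1 < ι α ∧
      (∀ φ : F →+* ℂ, φ α ≠ ((ι α : ℝ) : ℂ) → ‖φ α‖ < 1) ∧
      IntermediateField.adjoin ℚ {α} = ⊤ := by
  have := IsTotallyReal.of_forall_im_eq_zero htr
  set ιℂ : F →+* ℂ := Complex.ofRealHom.comp ι
  obtain ⟨a, ha, hlt⟩ := exists_ne_zero_forall_infinitePlace_lt_one (mk ιℂ)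
  obtain ⟨w', hw'⟩ := IsTotallyReal.exists_ne_infinitePlace hdeg (mk ιℂ)
  have hmk : mk ιℂ a = |ι a| := by simp [ιℂ]
  have ha₀ : 1 < |ι a| := hmk ▸ InfinitePlace.one_lt_of_lt_one ha hw' hlt
  have hsq_lt : ∀ ⦃w⦄, w ≠ mk ιℂ → w ((a ^ 2 : 𝓞 F) : F) < 1 := fun w hw ↦ by
    push_cast
    rw [map_pow]
    exact pow_lt_one₀ (apply_nonneg _ _) (hlt hw) two_ne_zero
  refine ⟨(a : F) ^ 2, (RingOfIntegers.isIntegral_coe a).pow 2, ?_, fun φ hφ ↦ ?_, ?_⟩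
  · rw [map_pow, ← sq_abs]
    exact one_lt_pow₀ ha₀ two_ne_zero
  · have hne : mk φ ≠ mk ιℂ := fun h ↦ hφ (by simp [IsTotallyReal.eq_of_mk_eq h, ιℂ])
    simpa [apply] using hsq_lt hne
  · exact_mod_cast is_primitive_element_of_infinitePlace_lt (pow_ne_zero 2 ha) hsq_lt
      (Or.inl (IsTotallyReal.isReal _))
end

section
/- Let f ∈ ℤ[x] be the minimal polynomial of a Pisot number α of degree d, and let C(f) be its companion matrix. For all sufficiently large n (specifically n > log_{|α₂|}(1/(2(d-1))) where |α₂| is the largest modulus among conjugates of α other than α), the trace of C(f)ⁿ equals the nearest integer to αⁿ. -/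
/-!
The roots of `f` are distinct since `f` is irreducible over `ℚ`, so their Vandermonde matrix
conjugates the companion matrix to the diagonal matrix of roots and `tr C(f)ⁿ = ∑ zⁿ` over all
roots `z`. Apart from `αⁿ`, each of the `d - 1` terms has modulus at most `|α₂|ⁿ`, and the bound
on `n` makes their sum smaller than `1/2`; hence the integer `tr C(f)ⁿ` is the nearest integer
to `αⁿ`.
-/

open Polynomial Matrix

/-- The companion matrix of a monic polynomial `f = x^d + c_{d-1}x^{d-1} + ⋯ + c_0`. -/
def companion {K : Type*} [CommRing K] (d : ℕ) (f : Polynomial K) :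
    Matrix (Fin d) (Fin d) K := fun i j =>
  if (i : ℕ) = (j : ℕ) + 1 then 1
  else if (j : ℕ) = d - 1 then -f.coeff i else 0

section Companion

variable {R : Type*} [CommRing R]

theorem companion_map {S : Type*} [CommRing S] (φ : R →+* S) (d : ℕ) (f : R[X]) :
    (companion d f).map φ = companion d (f.map φ) := by
  ext i j
  simp only [companion, map_apply, coeff_map, apply_ite φ, map_one, map_neg, map_zero]

theorem map_trace_companion_pow {S : Type*} [CommRing S] (φ : R →+* S) (d : ℕ) (f : R[X])
    (n : ℕ) : φ (trace (companion d f ^ n)) = trace (companion d (f.map φ) ^ n) := by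
  rw [AddMonoidHom.map_trace, Matrix.map_pow, companion_map]

theorem sum_coeff_mul_pow_of_isRoot {g : R[X]} (hm : g.Monic) {d : ℕ} (hdeg : g.natDegree = d)
    {x : R} (hx : g.IsRoot x) : ∑ k : Fin d, g.coeff k * x ^ (k : ℕ) = -x ^ d := by
  have h := eval_eq_sum_range (p := g) x
  rw [hx.eq_zero, hdeg, Finset.sum_range_succ, ← hdeg, hm.coeff_natDegree, hdeg] at h
  rw [Fin.sum_univ_eq_sum_range (fun k => g.coeff k * x ^ k)]
  linear_combination -h

theorem vandermonde_mul_companion {g : R[X]} (hm : g.Monic) {d : ℕ} (hdeg : g.natDegree = d)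
    {v : Fin d → R} (hv : ∀ i, g.IsRoot (v i)) :
    vandermonde v * companion d g = diagonal v * vandermonde v := by
  ext i j
  rw [mul_apply, diagonal_mul]
  simp only [vandermonde, companion, of_apply, mul_ite, mul_one, mul_zero, mul_neg]
  rcases eq_or_ne (j : ℕ) (d - 1) with hj | hj
  · have hjd : (j : ℕ) + 1 = d := by omega
    have hnone : ∀ k : Fin d, (k : ℕ) ≠ (j : ℕ) + 1 := fun k => by omega
    rw [Finset.sum_congr rfl fun k _ => by rw [if_neg (hnone k), if_pos hj],
      Finset.sum_neg_distrib, ← pow_succ', hjd, ← neg_neg (v i ^ d),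
      ← sum_coeff_mul_pow_of_isRoot hm hdeg (hv i)]
    simp only [mul_comm]
  · have hjd : (j : ℕ) + 1 < d := by omega
    rw [Finset.sum_eq_single ⟨(j : ℕ) + 1, hjd⟩ (fun k _ hk => by
      rw [if_neg (by simpa [Fin.ext_iff] using hk), if_neg hj]) (by simp), if_pos rfl, pow_succ']

end Companion

section Field

variable {K : Type*} [Field K]

theorem trace_companion_pow_eq_sum {g : K[X]} (hm : g.Monic) {d : ℕ} (hdeg : g.natDegree = d)
    {v : Fin d → K} (hv : ∀ i, g.IsRoot (v i)) (hinj : Function.Injective v) (n : ℕ) :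
    trace (companion d g ^ n) = ∑ i, v i ^ n := by
  obtain ⟨u, hu⟩ := (isUnit_iff_isUnit_det _).2
    (isUnit_iff_ne_zero.2 (det_vandermonde_ne_zero_iff.2 hinj))
  have hconj : (u : Matrix (Fin d) (Fin d) K) * companion d g *
      (↑u⁻¹ : Matrix (Fin d) (Fin d) K) = diagonal v := by
    rw [hu, vandermonde_mul_companion hm hdeg hv, Matrix.mul_assoc, ← hu, u.mul_inv,
      Matrix.mul_one]
  rw [← trace_units_conj u, ← Units.conj_pow, hconj, diagonal_pow, trace_diagonal]
  rfl

theorem trace_companion_pow_eq_sum_roots {g : K[X]} (hm : g.Monic) (hsplit : g.Splits)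
    (hnodup : g.roots.Nodup) {d : ℕ} (hdeg : g.natDegree = d) (n : ℕ) :
    trace (companion d g ^ n) = (g.roots.map (· ^ n)).sum := by
  set l := g.roots.toList
  have hlen : l.length = d := by
    rw [Multiset.length_toList, splits_iff_card_roots.1 hsplit, hdeg]
  have hl : l.Nodup := Multiset.coe_nodup.1 (by rwa [Multiset.coe_toList])
  subst hlen
  rw [trace_companion_pow_eq_sum hm hdeg (v := fun i => l[i.1])
      (fun i => (mem_roots hm.ne_zero).1 (Multiset.mem_toList.1 (List.getElem_mem _)))
      (fun i j hij => Fin.ext (hl.getElem_inj_iff.1 hij)),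
    Fin.sum_univ_fun_getElem l (· ^ n), ← Multiset.sum_coe, ← Multiset.map_coe,
    Multiset.coe_toList]

end Field

theorem separable_map_minpoly_int {L : Type*} [Field L] [CharZero L] {α : L}
    (hint : IsIntegral ℤ α) (K : Type*) [Field K] [CharZero K] :
    ((minpoly ℤ α).map (Int.castRingHom K)).Separable := by
  have hsep : (minpoly ℚ α).Separable := (minpoly.irreducible hint.tower_top).separable
  rw [minpoly.isIntegrallyClosed_eq_field_fractions' ℚ hint] at hsep
  have h := hsep.map (f := algebraMap ℚ K)
  rwa [Polynomial.map_map,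
    RingHom.ext_int ((algebraMap ℚ K).comp (algebraMap ℤ ℚ)) (Int.castRingHom K)] at h

theorem algebraMap_mem_roots_map_minpoly_int {L K : Type*} [Field L] [Field K] [Algebra L K]
    {α : L} (hint : IsIntegral ℤ α) :
    algebraMap L K α ∈ ((minpoly ℤ α).map (Int.castRingHom K)).roots := by
  have h := aeval_algebraMap_apply K α (minpoly ℤ α)
  rw [minpoly.aeval, map_zero, aeval_def, algebraMap_int_eq, ← eval_map] at h
  exact (mem_roots ((minpoly.monic hint).map _).ne_zero).2 h

theorem norm_sum_map_pow_le {E : Type*} [NormedDivisionRing E] {s : Multiset E} {b : ℝ}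
    (hb : ∀ z ∈ s, ‖z‖ ≤ b) (n : ℕ) :
    ‖(s.map (· ^ n)).sum‖ ≤ Multiset.card s * b ^ n := by
  calc ‖(s.map (· ^ n)).sum‖ ≤ (s.map fun z => ‖z‖ ^ n).sum := by
        simpa [Multiset.map_map, Function.comp_def] using norm_multiset_sum_le (s.map (· ^ n))
    _ ≤ Multiset.card s • b ^ n := by
        rw [← Multiset.card_map (fun z => ‖z‖ ^ n) s]
        refine Multiset.sum_le_card_nsmul (s.map fun z => ‖z‖ ^ n) (b ^ n) fun y hy => ?_
        obtain ⟨z, hz, rfl⟩ := Multiset.mem_map.1 hy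
        exact pow_le_pow_left₀ (norm_nonneg z) (hb z hz) n
    _ = Multiset.card s * b ^ n := nsmul_eq_mul _ _

theorem pow_lt_of_logb_lt {b x : ℝ} (hb₀ : 0 ≤ b) (hb₁ : b < 1) (hx : 0 < x) {n : ℕ}
    (hn : Real.logb b x < n) : b ^ n < x := by
  rcases hb₀.eq_or_lt with rfl | hb₀
  · have hn0 : n ≠ 0 := by rintro rfl; simp at hn
    simpa [zero_pow hn0] using hx
  · exact_mod_cast (Real.logb_lt_iff_lt_rpow_of_base_lt_one hb₀ hb₁ hx).1 hn

theorem sub_one_mul_pow_lt_half {b : ℝ} {d n : ℕ} (hd : 2 ≤ d) (hb₀ : 0 ≤ b) (hb₁ : b < 1)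
    (hn : Real.logb b (1 / (2 * ((d : ℝ) - 1))) < n) : ((d : ℝ) - 1) * b ^ n < 1 / 2 := by
  have hd₁ : (0 : ℝ) < d - 1 := by
    have : (2 : ℝ) ≤ d := by exact_mod_cast hd
    linarith
  calc ((d : ℝ) - 1) * b ^ n < (d - 1) * (1 / (2 * (d - 1))) := by
        gcongr
        exact pow_lt_of_logb_lt hb₀ hb₁ (by positivity) hn
    _ = 1 / 2 := by field_simp

theorem round_eq_of_abs_sub_lt {F : Type*} [Field F] [LinearOrder F] [IsStrictOrderedRing F]
    [FloorRing F] {x : F} {m : ℤ} (h : |x - m| < 1 / 2) : round x = m := by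
  obtain ⟨hlo, hhi⟩ := abs_lt.1 h
  exact round_eq_iff.2 ⟨by linarith, by linarith⟩

theorem stmt_8_general (α : ℝ) (hint : IsIntegral ℤ α)
    (f : Polynomial ℤ) (hf : f = minpoly ℤ α)
    (d : ℕ) (hd : d = f.natDegree) (hd2 : 2 ≤ d)
    (R : Multiset ℂ) (hR : R = (f.map (Int.castRingHom ℂ)).roots)
    (hsmall : ∀ z ∈ R, z ≠ (α : ℂ) → ‖z‖ < 1)
    (α₂ : ℂ) (hα₂ : α₂ ∈ R) (hα₂ne : α₂ ≠ (α : ℂ))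
    (hmax : ∀ z ∈ R, z ≠ (α : ℂ) → ‖z‖ ≤ ‖α₂‖)
    (n : ℕ)
    (hn : Real.logb ‖α₂‖ (1 / (2 * ((d : ℝ) - 1))) < n) :
    Matrix.trace ((companion d f) ^ n) = round (α ^ n) := by
  subst hf
  have hmon : ((minpoly ℤ α).map (Int.castRingHom ℂ)).Monic := (minpoly.monic hint).map _
  have hdeg : ((minpoly ℤ α).map (Int.castRingHom ℂ)).natDegree = d := by
    rw [(minpoly.monic hint).natDegree_map, hd]
  have hnodup : R.Nodup := hR ▸ nodup_roots (separable_map_minpoly_int hint ℂ)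
  have hαR : (α : ℂ) ∈ R := hR ▸ algebraMap_mem_roots_map_minpoly_int hint
  have htrace : ((trace (companion d (minpoly ℤ α) ^ n) : ℤ) : ℂ) =
      α ^ n + ((R.erase (α : ℂ)).map (· ^ n)).sum := by
    rw [← eq_intCast (Int.castRingHom ℂ), map_trace_companion_pow,
      Multiset.sum_map_erase (f := (· ^ n)) hαR, hR,
      trace_companion_pow_eq_sum_roots hmon (IsAlgClosed.splits _) (hR ▸ hnodup) hdeg]
  have hcard : (Multiset.card (R.erase (α : ℂ)) : ℝ) = d - 1 := by
    rw [Multiset.card_erase_of_mem hαR, hR, splits_iff_card_roots.1 (IsAlgClosed.splits _), hdeg,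
      Nat.pred_eq_sub_one, Nat.cast_pred (by omega)]
  have hrest : ‖((R.erase (α : ℂ)).map (· ^ n)).sum‖ < 1 / 2 := by
    refine lt_of_le_of_lt (hcard ▸ norm_sum_map_pow_le (fun z hz => ?_) n)
      (sub_one_mul_pow_lt_half hd2 (norm_nonneg _) (hsmall α₂ hα₂ hα₂ne) hn)
    exact hmax z (Multiset.mem_of_mem_erase hz) (hnodup.mem_erase_iff.1 hz).1
  refine (round_eq_of_abs_sub_lt ?_).symm
  rwa [← Real.norm_eq_abs, ← Complex.norm_real, Complex.ofReal_sub, Complex.ofReal_pow,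
    Complex.ofReal_intCast, htrace, sub_add_cancel_left, norm_neg]

/-- For a Pisot number `α` with minimal polynomial `f ∈ ℤ[x]` of degree `d`, and
`n > log_{|α₂|}(1/(2(d-1)))`, the trace of `C(f)ⁿ` equals the nearest integer to `αⁿ`. -/
theorem stmt_8 (α : ℝ) (hint : IsIntegral ℤ α) (hα : 1 < α)
    (f : Polynomial ℤ) (hf : f = minpoly ℤ α)
    (d : ℕ) (hd : d = f.natDegree) (hd2 : 2 ≤ d)
    (R : Multiset ℂ) (hR : R = (f.map (Int.castRingHom ℂ)).roots)
    (hsmall : ∀ z ∈ R, z ≠ (α : ℂ) → ‖z‖ < 1)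
    (α₂ : ℂ) (hα₂ : α₂ ∈ R) (hα₂ne : α₂ ≠ (α : ℂ))
    (hmax : ∀ z ∈ R, z ≠ (α : ℂ) → ‖z‖ ≤ ‖α₂‖)
    (n : ℕ)
    (hn : Real.logb ‖α₂‖ (1 / (2 * ((d : ℝ) - 1))) < n) :
    Matrix.trace ((companion d f) ^ n) = round (α ^ n) :=
  stmt_8_general α hint f hf d hd hd2 R hR hsmall α₂ hα₂ hα₂ne hmax n hn
end

section
/- Let α be a Pisot number with degree d ≥ 2 and second-largest conjugate modulus θ = |α₂| < 1. Then the sequence of nearest integers a_n = [αⁿ] satisfies the linear recurrence given by the minimal polynomial of α for all sufficiently large n: if f(x) = x^d + c_{d-1}x^{d-1} + ⋯ + c_0 is the minimal polynomial, then a_{n+d} + c_{d-1}a_{n+d-1} + ⋯ + c_0 a_n = 0 for all n > log_θ(1/(2(d-1))). -/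
/-!
The power sums `s_j = ∑ σ(α)^j` over the complex conjugates of `α` are traces of algebraic
integers, hence rational integers, and they satisfy the recurrence of `f` because
`∑ cᵢ z^(n+i) = zⁿ f(z) = 0` for every root `z`. Since `|s_j - α^j| ≤ (d-1)θ^j < 1/2` as soon as
`j > log_θ(1/(2(d-1)))`, `s_j` is the nearest integer to `α^j` from `n` on.
-/

open Polynomial IntermediateField

def powerSum {R : Type*} [CommSemiring R] (s : Multiset R) (j : ℕ) : R := (s.map (· ^ j)).sum

theorem sum_coeff_mul_powerSum_eq_zero {R : Type*} [CommRing R] (p : R[X]) (s : Multiset R)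
    (hs : ∀ z ∈ s, p.IsRoot z) (n : ℕ) :
    ∑ i ∈ Finset.range (p.natDegree + 1), p.coeff i * powerSum s (n + i) = 0 := by
  induction s using Multiset.induction_on with
  | empty => simp [powerSum]
  | cons z s ih =>
    have hz : z ^ n * p.eval z = 0 := by rw [hs z (Multiset.mem_cons_self z s), mul_zero]
    simp only [powerSum, Multiset.map_cons, Multiset.sum_cons, mul_add,
      Finset.sum_add_distrib] at ih ⊢
    rw [ih fun w hw => hs w (Multiset.mem_cons_of_mem hw), add_zero, ← hz, eval_eq_sum_range,
      Finset.mul_sum]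
    exact Finset.sum_congr rfl fun i _ => by ring

theorem norm_powerSum_sub_pow_le {𝕜 : Type*} [NormedField 𝕜] {s : Multiset 𝕜} {α : 𝕜} {θ : ℝ}
    (hs : s.Nodup) (hα : α ∈ s) (hθ : ∀ z ∈ s, z ≠ α → ‖z‖ ≤ θ) (j : ℕ) :
    ‖powerSum s j - α ^ j‖ ≤ ((s.card : ℝ) - 1) * θ ^ j := by
  classical
  have hsplit : powerSum s j - α ^ j = powerSum (s.erase α) j := by
    rw [powerSum, ← Multiset.cons_erase hα, Multiset.map_cons, Multiset.sum_cons,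
      Multiset.erase_cons_head, powerSum, add_sub_cancel_left]
  have hcard : (s.card : ℝ) - 1 = (s.erase α).card := by
    rw [Multiset.card_erase_of_mem hα, Nat.pred_eq_sub_one,
      Nat.cast_pred (Multiset.card_pos_iff_exists_mem.mpr ⟨α, hα⟩)]
  rw [hsplit, hcard, ← nsmul_eq_mul]
  refine (norm_multiset_sum_le _).trans ?_
  rw [Multiset.map_map]
  refine (Multiset.sum_le_card_nsmul _ _ fun r hr => ?_).trans_eq (by rw [Multiset.card_map])
  obtain ⟨z, hz, rfl⟩ := Multiset.mem_map.mp hr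
  rw [hs.mem_erase_iff] at hz
  simp only [Function.comp_apply, norm_pow]
  exact pow_le_pow_left₀ (norm_nonneg z) (hθ z hz.2 hz.1) j

theorem powerSum_aroots_minpoly_eq_trace {F L : Type*} (E : Type*) [Field F] [Field L] [Field E]
    [Algebra F L] [Algebra F E] [IsAlgClosed E] {x : L} (hx : IsIntegral F x)
    (hsep : IsSeparable F x) (j : ℕ) :
    powerSum ((minpoly F x).aroots E) j =
      algebraMap F E (Algebra.trace F F⟮x⟯ (AdjoinSimple.gen F x ^ j)) := by
  classical
  have : FiniteDimensional F F⟮x⟯ := adjoin.finiteDimensional hx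
  have : Algebra.IsSeparable F F⟮x⟯ := (isSeparable_adjoin_simple_iff_isSeparable F L).mpr hsep
  rw [trace_eq_sum_embeddings E]
  simp only [map_pow]
  rw [Fintype.sum_equiv (algHomAdjoinIntegralEquiv F hx) _ (fun r => (r : E) ^ j) fun σ => by
      rw [← algHomAdjoinIntegralEquiv_symm_apply_gen F hx, Equiv.symm_apply_apply]]
  rw [Finset.sum_mem_multiset _ _ (· ^ j) fun _ => rfl, Finset.sum_eq_multiset_sum,
    Multiset.toFinset_val, Multiset.dedup_eq_self.mpr (nodup_roots ((separable_map _).mpr hsep)),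
    powerSum]

theorem minpoly_int_map_eq {L E : Type*} [Field L] [CharZero L] [Field E] [CharZero E] {x : L}
    (hx : IsIntegral ℤ x) :
    (minpoly ℤ x).map (Int.castRingHom E) = (minpoly ℚ x).map (algebraMap ℚ E) := by
  rw [minpoly.isIntegrallyClosed_eq_field_fractions' ℚ hx, Polynomial.map_map]
  congr 1
  exact RingHom.ext_int _ _

theorem nodup_roots_minpoly_int_map {L E : Type*} [Field L] [CharZero L] [Field E] [CharZero E]
    {x : L} (hx : IsIntegral ℤ x) : ((minpoly ℤ x).map (Int.castRingHom E)).roots.Nodup := by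
  rw [minpoly_int_map_eq hx]
  exact nodup_roots ((separable_map _).mpr (minpoly.irreducible hx.tower_top).separable)

theorem exists_int_eq_powerSum_roots_minpoly {L E : Type*} [Field L] [CharZero L] [Field E]
    [CharZero E] [IsAlgClosed E] {x : L} (hx : IsIntegral ℤ x) (j : ℕ) :
    ∃ m : ℤ, (m : E) = powerSum ((minpoly ℤ x).map (Int.castRingHom E)).roots j := by
  have hxQ : IsIntegral ℚ x := hx.tower_top
  have hgen : IsIntegral ℤ (AdjoinSimple.gen ℚ x) := by
    rwa [← isIntegral_algebraMap_iff (algebraMap ℚ⟮x⟯ L).injective, AdjoinSimple.algebraMap_gen]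
  have : FiniteDimensional ℚ ℚ⟮x⟯ := adjoin.finiteDimensional hxQ
  obtain ⟨m, hm⟩ :=
    IsIntegrallyClosed.isIntegral_iff.mp (Algebra.isIntegral_trace (L := ℚ) (hgen.pow j))
  refine ⟨m, ?_⟩
  rw [minpoly_int_map_eq hx, ← aroots_def,
    powerSum_aroots_minpoly_eq_trace E hxQ (minpoly.irreducible hxQ).separable]
  -- `hm` uses `DivisionRing.toRatAlgebra` on `ℚ⟮x⟯`; `ℚ`-algebra structures are unique
  convert congrArg (algebraMap ℚ E) hm
  · simp
  · exact Subsingleton.elim _ _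

theorem algebraMap_mem_roots_minpoly_int_map {L E : Type*} [CommRing L] [CommRing E] [IsDomain E]
    [Algebra L E] {x : L} (hx : IsIntegral ℤ x) :
    algebraMap L E x ∈ ((minpoly ℤ x).map (Int.castRingHom E)).roots := by
  rw [mem_roots ((minpoly.monic hx).map _).ne_zero, IsRoot, eval_map, ← algebraMap_int_eq,
    ← aeval_def, aeval_algebraMap_apply, minpoly.aeval, map_zero]

theorem sum_coeff_mul_eq_zero_of_intCast_eq_powerSum {E : Type*} [CommRing E] [IsDomain E]
    [CharZero E] (p : ℤ[X]) (b : ℕ → ℤ)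
    (hb : ∀ j, (b j : E) = powerSum (p.map (Int.castRingHom E)).roots j) (n : ℕ) :
    ∑ i ∈ Finset.range (p.natDegree + 1), p.coeff i * b (n + i) = 0 := by
  have hrec := sum_coeff_mul_powerSum_eq_zero (p.map (Int.castRingHom E)) _
    (fun z hz => (mem_roots'.mp hz).2) n
  rw [natDegree_map_eq_of_injective Int.cast_injective] at hrec
  simp only [coeff_map, ← hb, eq_intCast] at hrec
  exact_mod_cast hrec

theorem pow_lt_of_logb_lt_s17 {θ x : ℝ} {n : ℕ} (hθ0 : 0 ≤ θ) (hθ1 : θ < 1) (hx : 0 < x)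
    (h : Real.logb θ x < n) : θ ^ n < x := by
  rcases hθ0.eq_or_lt with rfl | hθ0
  · -- `Real.logb 0 x = 0`, so here `h` only says `0 < n`
    have hn : 0 < n := by simpa using h
    rwa [zero_pow hn.ne']
  · exact_mod_cast (Real.logb_lt_iff_lt_rpow_of_base_lt_one hθ0 hθ1 hx).mp h

theorem mul_pow_lt_half_of_logb_lt {D θ : ℝ} {n j : ℕ} (hD : 0 < D) (hθ0 : 0 ≤ θ) (hθ1 : θ < 1)
    (hn : Real.logb θ (1 / (2 * D)) < n) (hj : n ≤ j) : D * θ ^ j < 1 / 2 :=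
  calc D * θ ^ j ≤ D * θ ^ n :=
        mul_le_mul_of_nonneg_left (pow_le_pow_of_le_one hθ0 hθ1.le hj) hD.le
    _ < D * (1 / (2 * D)) := by gcongr; exact pow_lt_of_logb_lt_s17 hθ0 hθ1 (by positivity) hn
    _ = 1 / 2 := by field_simp

theorem round_eq_of_abs_sub_lt_s17 {x : ℝ} {m : ℤ} (h : |x - m| < 1 / 2) : round x = m := by
  rw [round_eq_iff, Set.mem_Ico]
  constructor <;> linarith [(abs_lt.mp h).1, (abs_lt.mp h).2]

theorem round_pow_eq_of_intCast_eq_powerSum {s : Multiset ℂ} {α θ : ℝ} {m : ℤ} {j : ℕ}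
    (hs : s.Nodup) (hα : (α : ℂ) ∈ s) (hθ : ∀ z ∈ s, z ≠ α → ‖z‖ ≤ θ)
    (hsmall : ((s.card : ℝ) - 1) * θ ^ j < 1 / 2) (hm : (m : ℂ) = powerSum s j) :
    round (α ^ j) = m := by
  refine round_eq_of_abs_sub_lt_s17 (lt_of_le_of_lt ?_ hsmall)
  rw [abs_sub_comm, ← Real.norm_eq_abs, ← Complex.norm_real]
  push_cast
  rw [hm]
  exact norm_powerSum_sub_pow_le hs hα hθ j

theorem stmt_17_general (α : ℝ) (hint : IsIntegral ℤ α)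
    (f : Polynomial ℤ) (hf : f = minpoly ℤ α)
    (d : ℕ) (hd : d = f.natDegree) (hd2 : 2 ≤ d)
    (θ : ℝ)
    (hθ : ∃ α₂ ∈ (f.map (Int.castRingHom ℂ)).roots, α₂ ≠ (α : ℂ) ∧ θ = ‖α₂‖ ∧
      ∀ z ∈ (f.map (Int.castRingHom ℂ)).roots, z ≠ (α : ℂ) → ‖z‖ ≤ θ)
    (hθ1 : θ < 1)
    (a : ℕ → ℤ) (ha : ∀ j, a j = round (α ^ j))
    (n : ℕ) (hn : Real.logb θ (1 / (2 * ((d : ℝ) - 1))) < n) :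
    ∑ i ∈ Finset.range (d + 1), f.coeff i * a (n + i) = 0 := by
  obtain ⟨α₂, -, -, rfl, hθmax⟩ := hθ
  subst hf
  have hαroot : (α : ℂ) ∈ ((minpoly ℤ α).map (Int.castRingHom ℂ)).roots :=
    algebraMap_mem_roots_minpoly_int_map hint
  have hcard : ((minpoly ℤ α).map (Int.castRingHom ℂ)).roots.card = d := by
    rw [hd, IsAlgClosed.card_roots_map_eq_natDegree_of_injective _ Int.cast_injective]
  have hD : (0 : ℝ) < d - 1 := by
    have : (2 : ℝ) ≤ d := by exact_mod_cast hd2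
    linarith
  choose b hb using exists_int_eq_powerSum_roots_minpoly (E := ℂ) hint
  have hab : ∀ j, n ≤ j → a j = b j := fun j hj =>
    (ha j).trans <| round_pow_eq_of_intCast_eq_powerSum (nodup_roots_minpoly_int_map hint) hαroot
      hθmax (by rw [hcard]; exact mul_pow_lt_half_of_logb_lt hD (norm_nonneg _) hθ1 hn hj) (hb j)
  rw [Finset.sum_congr rfl fun i _ => by rw [hab (n + i) (Nat.le_add_right n i)], hd]
  exact sum_coeff_mul_eq_zero_of_intCast_eq_powerSum _ b hb n

/-- For a Pisot number `α` with minimal polynomial `f` of degree `d ≥ 2` and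
second-largest conjugate modulus `θ < 1`, the nearest integers `a_n = [αⁿ]` satisfy the
linear recurrence given by `f` for all `n > log_θ(1/(2(d-1)))`:
`a_{n+d} + c_{d-1}a_{n+d-1} + ⋯ + c_0 a_n = 0`. -/
theorem stmt_17 (α : ℝ) (hint : IsIntegral ℤ α) (hα : 1 < α)
    (f : Polynomial ℤ) (hf : f = minpoly ℤ α)
    (d : ℕ) (hd : d = f.natDegree) (hd2 : 2 ≤ d)
    (θ : ℝ)
    (hθ : ∃ α₂ ∈ (f.map (Int.castRingHom ℂ)).roots, α₂ ≠ (α : ℂ) ∧ θ = ‖α₂‖ ∧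
      ∀ z ∈ (f.map (Int.castRingHom ℂ)).roots, z ≠ (α : ℂ) → ‖z‖ ≤ θ)
    (hθ1 : θ < 1)
    (a : ℕ → ℤ) (ha : ∀ j, a j = round (α ^ j))
    (n : ℕ) (hn : Real.logb θ (1 / (2 * ((d : ℝ) - 1))) < n) :
    ∑ i ∈ Finset.range (d + 1), f.coeff i * a (n + i) = 0 :=
  stmt_17_general α hint f hf d hd hd2 θ hθ hθ1 a ha n hn
end
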